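/- Let L be a finite lattice and let π↓ : L → L and π↑ : L → L be idempotent, order-preserving maps such that for all x ∈ L: (1) π↓(x) ≤ x ≤ π↑(x), (2) π↓(π↑(x)) = π↓(x), and (3) π↑(π↓(x)) = π↑(x). Then the equivalence relation Θ defined by x ≡ y mod Θ if and only if π↓(x) = π↓(y) is a lattice congruence of L. -/

import Mathlib

universe u v

/-- A lattice congruence on a lattice `L`: an equivalence relation compatible with
meets and joins. -/
structure LatticeCongr (L : Type u) [Lattice L] : Type u where
  r : L → L → Prop
  refl : ∀ x, r x x
  symm : ∀ x y, r x y → r y x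
  trans : ∀ x y z, r x y → r y z → r x z
  inf_congr : ∀ x y z, r x y → r (x ⊓ z) (y ⊓ z)
  sup_congr : ∀ x y z, r x y → r (x ⊔ z) (y ⊔ z)

namespace LatticeCongr

variable {L : Type u} [Lattice L]

theorem ext' {c d : LatticeCongr L} (h : ∀ x y, c.r x y ↔ d.r x y) : c = d := by
  have hr : c.r = d.r := funext fun x => funext fun y => propext (h x y)
  cases c; cases d
  subst hr
  rfl

/-- Congruences are ordered by refinement. -/
instance : PartialOrder (LatticeCongr L) where
  le c d := ∀ x y : L, c.r x y → d.r x y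
  le_refl c := fun _ _ h => h
  le_trans a b c hab hbc := fun x y h => hbc x y (hab x y h)
  le_antisymm a b hab hba := ext' fun x y => ⟨hab x y, hba x y⟩

/-- The join of two congruences. -/
def conSup (c d : LatticeCongr L) : LatticeCongr L where
  r x y := ∀ e : LatticeCongr L, c ≤ e → d ≤ e → e.r x y
  refl := fun x e _ _ => e.refl x
  symm := fun x y h e hc hd => e.symm x y (h e hc hd)
  trans := fun x y z h h' e hc hd => e.trans x y z (h e hc hd) (h' e hc hd)
  inf_congr := fun x y z h e hc hd => e.inf_congr x y z (h e hc hd)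
  sup_congr := fun x y z h e hc hd => e.sup_congr x y z (h e hc hd)

/-- The meet of two congruences (their intersection). -/
def conInf (c d : LatticeCongr L) : LatticeCongr L where
  r x y := c.r x y ∧ d.r x y
  refl := fun x => ⟨c.refl x, d.refl x⟩
  symm := fun x y h => ⟨c.symm x y h.1, d.symm x y h.2⟩
  trans := fun x y z h h' => ⟨c.trans x y z h.1 h'.1, d.trans x y z h.2 h'.2⟩
  inf_congr := fun x y z h => ⟨c.inf_congr x y z h.1, d.inf_congr x y z h.2⟩
  sup_congr := fun x y z h => ⟨c.sup_congr x y z h.1, d.sup_congr x y z h.2⟩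

/-- The lattice `Con(L)` of congruences of `L`. -/
instance : Lattice (LatticeCongr L) where
  sup := conSup
  le_sup_left c d := fun x y h e hc _ => hc x y h
  le_sup_right c d := fun x y h e _ hd => hd x y h
  sup_le a b c hac hbc := fun x y h => h c hac hbc
  inf := conInf
  inf_le_left c d := fun _ _ h => h.1
  inf_le_right c d := fun _ _ h => h.2
  le_inf a b c hab hac := fun x y h => ⟨hab x y h, hac x y h⟩

/-- `conGen a b` is the finest lattice congruence identifying `a` and `b`. -/
def conGen (a b : L) : LatticeCongr L where
  r x y := ∀ e : LatticeCongr L, e.r a b → e.r x y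
  refl := fun x e _ => e.refl x
  symm := fun x y h e he => e.symm x y (h e he)
  trans := fun x y z h h' e he => e.trans x y z (h e he) (h' e he)
  inf_congr := fun x y z h e he => e.inf_congr x y z (h e he)
  sup_congr := fun x y z h e he => e.sup_congr x y z (h e he)

/-- The setoid underlying a lattice congruence. -/
def setoid (c : LatticeCongr L) : Setoid L :=
  ⟨c.r, ⟨c.refl, fun h => c.symm _ _ h, fun h h' => c.trans _ _ _ h h'⟩⟩

/-- The quotient of `L` by a lattice congruence. -/
def Quo (c : LatticeCongr L) : Type u := Quotient c.setoid

/-- The canonical quotient map `L → L/Θ`. -/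
def mkQ (c : LatticeCongr L) (x : L) : c.Quo := Quotient.mk c.setoid x

variable (c : LatticeCongr L)

theorem sup_congr₂ {x x' y y' : L} (hx : c.r x x') (hy : c.r y y') :
    c.r (x ⊔ y) (x' ⊔ y') := by
  have h1 : c.r (x ⊔ y) (x' ⊔ y) := c.sup_congr x x' y hx
  have h2 : c.r (y ⊔ x') (y' ⊔ x') := c.sup_congr y y' x' hy
  rw [sup_comm y x', sup_comm y' x'] at h2
  exact c.trans _ _ _ h1 h2

theorem inf_congr₂ {x x' y y' : L} (hx : c.r x x') (hy : c.r y y') :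
    c.r (x ⊓ y) (x' ⊓ y') := by
  have h1 : c.r (x ⊓ y) (x' ⊓ y) := c.inf_congr x x' y hx
  have h2 : c.r (y ⊓ x') (y' ⊓ x') := c.inf_congr y y' x' hy
  rw [inf_comm y x', inf_comm y' x'] at h2
  exact c.trans _ _ _ h1 h2

instance : Max c.Quo :=
  ⟨Quotient.lift₂ (fun x y => c.mkQ (x ⊔ y))
    (fun _ _ _ _ hx hy => Quotient.sound (c.sup_congr₂ hx hy))⟩

instance : Min c.Quo :=
  ⟨Quotient.lift₂ (fun x y => c.mkQ (x ⊓ y))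
    (fun _ _ _ _ hx hy => Quotient.sound (c.inf_congr₂ hx hy))⟩

theorem quo_sup_comm (a b : c.Quo) : a ⊔ b = b ⊔ a :=
  Quotient.inductionOn₂ a b fun x y => congrArg (Quotient.mk c.setoid) (sup_comm x y)

theorem quo_sup_assoc (a b d : c.Quo) : a ⊔ b ⊔ d = a ⊔ (b ⊔ d) :=
  Quotient.inductionOn₃ a b d fun x y z => congrArg (Quotient.mk c.setoid) (sup_assoc x y z)

theorem quo_inf_comm (a b : c.Quo) : a ⊓ b = b ⊓ a :=
  Quotient.inductionOn₂ a b fun x y => congrArg (Quotient.mk c.setoid) (inf_comm x y)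

theorem quo_inf_assoc (a b d : c.Quo) : a ⊓ b ⊓ d = a ⊓ (b ⊓ d) :=
  Quotient.inductionOn₃ a b d fun x y z => congrArg (Quotient.mk c.setoid) (inf_assoc x y z)

theorem quo_sup_inf_self (a b : c.Quo) : a ⊔ a ⊓ b = a :=
  Quotient.inductionOn₂ a b fun x y =>
    congrArg (Quotient.mk c.setoid) (sup_inf_self (a := x) (b := y))

theorem quo_inf_sup_self (a b : c.Quo) : a ⊓ (a ⊔ b) = a :=
  Quotient.inductionOn₂ a b fun x y =>
    congrArg (Quotient.mk c.setoid) (inf_sup_self (a := x) (b := y))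

/-- The quotient lattice `L/Θ`. -/
instance : Lattice c.Quo :=
  Lattice.mk' c.quo_sup_comm c.quo_sup_assoc c.quo_inf_comm c.quo_inf_assoc
    c.quo_sup_inf_self c.quo_inf_sup_self

end LatticeCongr

open LatticeCongr in
/-- A finite lattice is congruence-uniform if `j ↦ con(j₊, j)` is a bijection from
join-irreducibles of `L` onto join-irreducibles of `Con(L)`, and dually
`m ↦ con(m, m⁺)` is a bijection from meet-irreducibles of `L` onto
meet-irreducibles of `Con(L)`. -/
def IsCongruenceUniform (L : Type u) [Lattice L] : Prop :=
  (∀ j : L, SupIrred j → ∀ a : L, a ⋖ j → SupIrred (conGen a j)) ∧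
  (∀ j j' a a' : L, SupIrred j → SupIrred j' → a ⋖ j → a' ⋖ j' →
      conGen a j = conGen a' j' → j = j') ∧
  (∀ Θ : LatticeCongr L, SupIrred Θ → ∃ j a : L, SupIrred j ∧ a ⋖ j ∧ conGen a j = Θ) ∧
  (∀ m : L, InfIrred m → ∀ b : L, m ⋖ b → InfIrred (conGen m b)) ∧
  (∀ m m' b b' : L, InfIrred m → InfIrred m' → m ⋖ b → m' ⋖ b' →
      conGen m b = conGen m' b' → m = m') ∧
  (∀ Θ : LatticeCongr L, InfIrred Θ → ∃ m b : L, InfIrred m ∧ m ⋖ b ∧ conGen m b = Θ)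

/-- `C` is a maximal chain of the closed interval `[a, b]`. -/
def IsMaxChainIn {L : Type u} [Lattice L] (a b : L) (C : Set L) : Prop :=
  C ⊆ Set.Icc a b ∧ IsChain (· ≤ ·) C ∧
    ∀ D : Set L, D ⊆ Set.Icc a b → IsChain (· ≤ ·) D → C ⊆ D → C = D

/-- `u` and `v` are consecutive elements of the chain `C` (the covering pairs of `C`
viewed as a poset in its own right). -/
def ConsecIn {L : Type u} [Lattice L] (C : Set L) (u v : L) : Prop :=
  u ∈ C ∧ v ∈ C ∧ u < v ∧ ∀ w ∈ C, ¬(u < w ∧ w < v)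

/-- `lam` is a CN-labeling of the lattice `L` (with values in the poset `P`):
the defining conditions (CN1), (CN2), (CN3) hold in `L` and in its order-dual. -/
def IsCNLabeling {L : Type u} [Lattice L] {P : Type v} [PartialOrder P]
    (lam : L → L → P) : Prop :=
  (∀ x y z : L, x ≠ y → z ⋖ x → z ⋖ y →
    ∀ C₁ C₂ : Set L, IsMaxChainIn z (x ⊔ y) C₁ → IsMaxChainIn z (x ⊔ y) C₂ →
      x ∈ C₁ → y ∈ C₂ →
      (∀ x' ∈ C₁, x' ⋖ (x ⊔ y) → lam x' (x ⊔ y) = lam z y) ∧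
      (∀ y' ∈ C₂, y' ⋖ (x ⊔ y) → lam y' (x ⊔ y) = lam z x) ∧
      (∀ u v : L, ConsecIn C₁ u v → z < u → v < x ⊔ y →
        lam z x < lam u v ∧ lam z y < lam u v) ∧
      (∀ u v u' v' : L, ConsecIn C₁ u v → ConsecIn C₁ u' v' →
        lam u v = lam u' v' → u = u' ∧ v = v')) ∧
  (∀ x y z : L, x ≠ y → x ⋖ z → y ⋖ z →
    ∀ C₁ C₂ : Set L, IsMaxChainIn (x ⊓ y) z C₁ → IsMaxChainIn (x ⊓ y) z C₂ →
      x ∈ C₁ → y ∈ C₂ →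
      (∀ x' ∈ C₁, (x ⊓ y) ⋖ x' → lam (x ⊓ y) x' = lam y z) ∧
      (∀ y' ∈ C₂, (x ⊓ y) ⋖ y' → lam (x ⊓ y) y' = lam x z) ∧
      (∀ u v : L, ConsecIn C₁ u v → x ⊓ y < u → v < z →
        lam x z < lam u v ∧ lam y z < lam u v) ∧
      (∀ u v u' v' : L, ConsecIn C₁ u v → ConsecIn C₁ u' v' →
        lam u v = lam u' v' → u = u' ∧ v = v'))

/-- `lam` is a CU-labeling of the lattice `L`: a CN-labeling satisfying (CU1), (CU2). -/
def IsCULabeling {L : Type u} [Lattice L] {P : Type v} [PartialOrder P]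
    (lam : L → L → P) : Prop :=
  IsCNLabeling lam ∧
  (∀ j j' a a' : L, SupIrred j → SupIrred j' → a ⋖ j → a' ⋖ j' → j ≠ j' →
    lam a j ≠ lam a' j') ∧
  (∀ m m' b b' : L, InfIrred m → InfIrred m' → m ⋖ b → m' ⋖ b' → m ≠ m' →
    lam m b ≠ lam m' b')

/-- `λ↓(x)`: the set of labels of covering pairs below `x`. -/
def lamDown {L : Type u} [Lattice L] {P : Type v} (lam : L → L → P) (x : L) : Set P :=
  {p | ∃ y, y ⋖ x ∧ lam y x = p}

/-- `λ↑(x)`: the set of labels of covering pairs above `x`. -/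
def lamUp {L : Type u} [Lattice L] {P : Type v} (lam : L → L → P) (x : L) : Set P :=
  {p | ∃ y, x ⋖ y ∧ lam x y = p}

/-- Covering pairs `(x, y)` and `(w, z)` are associates. -/
def AreAssociates {L : Type u} [Lattice L] (x y w z : L) : Prop :=
  (y ⊓ w = x ∧ y ⊔ w = z) ∨ (x ⊓ z = w ∧ x ⊔ z = y)

/-- `x = ⋁ A` is the canonical join-representation of `x`. -/
def IsCanonicalJoinRep {L : Type u} [Lattice L] (A : Set L) (x : L) : Prop :=
  (∀ a ∈ A, SupIrred a) ∧ IsLUB A x ∧ (∀ B ⊂ A, ¬IsLUB B x) ∧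
    ∀ B : Set L, (∀ b ∈ B, SupIrred b) → IsLUB B x → (∀ B' ⊂ B, ¬IsLUB B' x) →
      ∀ a ∈ A, ∃ b ∈ B, a ≤ b

/-- `x = ⋀ A` is the canonical meet-representation of `x`. -/
def IsCanonicalMeetRep {L : Type u} [Lattice L] (A : Set L) (x : L) : Prop :=
  (∀ a ∈ A, InfIrred a) ∧ IsGLB A x ∧ (∀ B ⊂ A, ¬IsGLB B x) ∧
    ∀ B : Set L, (∀ b ∈ B, InfIrred b) → IsGLB B x → (∀ B' ⊂ B, ¬IsGLB B' x) →
      ∀ a ∈ A, ∃ b ∈ B, b ≤ a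

theorem Monotone.map_inf_eq_map_map_inf {α : Type*} [SemilatticeInf α] {f : α → α}
    (hf : Monotone f) (hf_idem : ∀ x, f (f x) = f x) (hf_le : ∀ x, f x ≤ x) (x z : α) :
    f (x ⊓ z) = f (f x ⊓ z) := by
  refine le_antisymm ?_ (hf (inf_le_inf_right z (hf_le x)))
  have hle : f (x ⊓ z) ≤ f x ⊓ z :=
    le_inf (hf inf_le_left) ((hf_le _).trans inf_le_right)
  calc f (x ⊓ z) = f (f (x ⊓ z)) := (hf_idem _).symm
    _ ≤ f (f x ⊓ z) := hf hle

theorem Monotone.map_sup_eq_map_sup_of_map_comp {α : Type*} [SemilatticeSup α] {f g : α → α}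
    (hf : Monotone f) (hg : Monotone g) (hg_le : ∀ x, x ≤ g x) (hfg : ∀ x, f (g x) = f x)
    (x z : α) : f (x ⊔ z) = f (g x ⊔ z) := by
  refine le_antisymm (hf (sup_le_sup_right (hg_le x) z)) ?_
  have hle : g x ⊔ z ≤ g (x ⊔ z) :=
    sup_le (hg le_sup_left) ((hg_le z).trans (hg le_sup_right))
  calc f (g x ⊔ z) ≤ f (g (x ⊔ z)) := hf hle
    _ = f (x ⊔ z) := hfg _

theorem pi_down_up_induce_congruence_general
    {L : Type u} [Lattice L]
    (pd pu : L → L)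
    (hd_mono : Monotone pd) (hu_mono : Monotone pu)
    (hd_idem : ∀ x, pd (pd x) = pd x)
    (hsandwich : ∀ x : L, pd x ≤ x ∧ x ≤ pu x)
    (hdu : ∀ x, pd (pu x) = pd x)
    (hud : ∀ x, pu (pd x) = pu x) :
    Equivalence (fun x y : L => pd x = pd y) ∧
      (∀ x y z : L, pd x = pd y → pd (x ⊓ z) = pd (y ⊓ z)) ∧
      (∀ x y z : L, pd x = pd y → pd (x ⊔ z) = pd (y ⊔ z)) := by
  have hinf := hd_mono.map_inf_eq_map_map_inf hd_idem fun x => (hsandwich x).1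
  have hsup := hd_mono.map_sup_eq_map_sup_of_map_comp hu_mono (fun x => (hsandwich x).2) hdu
  refine ⟨⟨fun _ => rfl, Eq.symm, Eq.trans⟩, fun x y z h => ?_, fun x y z h => ?_⟩
  · rw [hinf x z, hinf y z, h]
  · -- `pu = pu ∘ pd`, so `pu` is constant on the fibres of `pd`
    have hpu : pu x = pu y := by rw [← hud x, ← hud y, h]
    rw [hsup x z, hsup y z, hpu]

/-- Idempotent order-preserving maps `π↓ ≤ id ≤ π↑` with
`π↓ ∘ π↑ = π↓` and `π↑ ∘ π↓ = π↑` induce a lattice congruence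
`x ≡ y ↔ π↓ x = π↓ y`. -/
theorem pi_down_up_induce_congruence
    {L : Type u} [Lattice L] [Fintype L]
    (pd pu : L → L)
    (hd_mono : Monotone pd) (hu_mono : Monotone pu)
    (hd_idem : ∀ x, pd (pd x) = pd x) (hu_idem : ∀ x, pu (pu x) = pu x)
    (hsandwich : ∀ x : L, pd x ≤ x ∧ x ≤ pu x)
    (hdu : ∀ x, pd (pu x) = pd x)
    (hud : ∀ x, pu (pd x) = pu x) :
    Equivalence (fun x y : L => pd x = pd y) ∧
      (∀ x y z : L, pd x = pd y → pd (x ⊓ z) = pd (y ⊓ z)) ∧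
      (∀ x y z : L, pd x = pd y → pd (x ⊔ z) = pd (y ⊔ z)) :=
  pi_down_up_induce_congruence_general pd pu hd_mono hu_mono hd_idem hsandwich hdu hud
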